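/- arXiv:2403.02627 — 2 statements merged into one kernel-verified Lean document; each statement's English description precedes it below -/
import Mathlib

section
/- Let X ⊆ (S³)³ be a compact set of plane configurations such that every mass distribution on ℝ³ with connected support admits an eight-partition by some configuration in X. Then for every finite point set P ⊂ ℝ³ there exists a configuration ℋ∞ ∈ X that eight-partitions P, i.e., each of the eight open octants determined by ℋ∞ contains at most |P|/8 points of P. -/
open MeasureTheory
open scoped RealInnerProductSpace

noncomputable section

abbrev E3 := EuclideanSpace ℝ (Fin 3)
abbrev E4 := EuclideanSpace ℝ (Fin 4)

/-- Open half-space of ℝ³ determined by a point `w ∈ S³ ⊂ ℝ⁴` (parameterizing the oriented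
plane `{x | w₀x₀ + w₁x₁ + w₂x₂ + w₃ = 0}`): the positive (`true`) or negative (`false`)
side. -/
def sHalf (w : E4) (s : Bool) : Set E3 :=
  if s then {x | 0 < w 0 * x 0 + w 1 * x 1 + w 2 * x 2 + w 3}
  else {x | w 0 * x 0 + w 1 * x 1 + w 2 * x 2 + w 3 < 0}

/-- Open octant of a triple of planes parameterized by `(S³)³`. -/
def sOctant (H : Fin 3 → E4) (α : Fin 3 → Bool) : Set E3 :=
  ⋂ i, sHalf (H i) (α i)

def IsMassDistribution (μ : Measure E3) : Prop :=
  IsFiniteMeasure μ ∧ ∀ v : E3, v ≠ 0 → ∀ a : ℝ, μ {x | ⟪v, x⟫ = a} = 0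

/-- The support of a measure on ℝ³. -/
def msupport (μ : Measure E3) : Set E3 :=
  {x | ∀ r > 0, 0 < μ (Metric.ball x r)}

/-! Thicken each point of `P` into a unit of mass spread uniformly over a ball of radius `ε`, and
add a background mass `1/2` spread over a large ball containing all of these, which makes the
support a ball and hence connected. An eight-partition of this measure leaves mass at most
`(|P| + 1/2)/8` in each octant. Letting `ε → 0`, a subsequence of the partitioning configurations
converges in the compact set `X`; a point in an open octant of the limit has its whole `ε`-ball
inside the corresponding octant of the configurations close to the limit, so each octant of the
limit contains at most `(|P| + 1/2)/8` points, that is at most `|P|/8` by integrality. -/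

open Metric Filter Topology ENNReal ProbabilityTheory

namespace MeasureTheory.Measure

variable {X : Type*} [TopologicalSpace X] [MeasurableSpace X]

lemma support_smul {c : ℝ≥0∞} (hc : c ≠ 0) (μ : Measure X) : (c • μ).support = μ.support :=
  subset_antisymm smul_absolutelyContinuous.support_mono
    (absolutelyContinuous_smul hc).support_mono

lemma support_finset_sum {ι : Type*} (s : Finset ι) (μ : ι → Measure X) :
    (∑ i ∈ s, μ i).support = ⋃ i ∈ s, (μ i).support := by
  classical
  induction s using Finset.induction_on with
  | empty => simp
  | insert i s hi ih => rw [Finset.sum_insert hi, support_add, ih, Finset.set_biUnion_insert]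

lemma support_cond_of_isOpen [OpensMeasurableSpace X]
    (μ : Measure X) [μ.IsOpenPosMeasure] {U : Set X} (hU : IsOpen U) (hUfin : μ U ≠ ∞) :
    (μ[|U]).support = closure U := by
  rw [ProbabilityTheory.cond, support_smul (ENNReal.inv_ne_zero.mpr hUfin)]
  refine subset_antisymm (support_restrict_subset.trans Set.inter_subset_left) ?_
  refine closure_minimal (fun x hx => ?_) isClosed_support
  exact interior_inter_support
    ⟨hU.interior_eq.symm ▸ hx, (support_eq_univ (μ := μ)) ▸ Set.mem_univ x⟩

lemma addHaar_setOf_inner_eq {E : Type*} [NormedAddCommGroup E] [InnerProductSpace ℝ E]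
    [FiniteDimensional ℝ E] [MeasurableSpace E] [BorelSpace E] (μ : Measure E)
    [μ.IsAddHaarMeasure] {v : E} (hv : v ≠ 0) (a : ℝ) : μ {x | ⟪v, x⟫ = a} = 0 := by
  let s : AffineSubspace ℝ E :=
    (affineSpan ℝ {a}).comap (innerₛₗ ℝ v).toAffineMap
  have hs : (s : Set E) = {x | ⟪v, x⟫ = a} := by
    ext x; simp [s, eq_comm]
  rw [← hs]
  refine addHaar_affineSubspace μ s fun htop => hv ?_
  have h0 : (0 : E) ∈ (s : Set E) := htop ▸ AffineSubspace.mem_top ℝ E 0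
  have h1 : v ∈ (s : Set E) := htop ▸ AffineSubspace.mem_top ℝ E v
  rw [hs] at h0 h1
  simp only [Set.mem_ofPred_eq, inner_zero_right] at h0 h1
  exact inner_self_eq_zero.mp (h1.trans h0.symm)

end MeasureTheory.Measure

open MeasureTheory

lemma msupport_eq_support (μ : Measure E3) : msupport μ = μ.support :=
  Set.ext fun _ => nhds_basis_ball.mem_measureSupport.symm

lemma isOpen_setOf_mem_sHalf (s : Bool) : IsOpen {q : E4 × E3 | q.2 ∈ sHalf q.1 s} := by
  cases s <;> simp only [sHalf, Bool.false_eq_true, if_false, if_true, Set.mem_ofPred_eq]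
  · exact isOpen_lt (by fun_prop) continuous_const
  · exact isOpen_lt continuous_const (by fun_prop)

lemma isOpen_setOf_mem_sOctant (α : Fin 3 → Bool) :
    IsOpen {q : (Fin 3 → E4) × E3 | q.2 ∈ sOctant q.1 α} := by
  simp only [sOctant, Set.mem_iInter, Set.ofPred_forall]
  exact isOpen_iInter_of_finite fun i =>
    (isOpen_setOf_mem_sHalf (α i)).preimage
      (by fun_prop : Continuous fun q : (Fin 3 → E4) × E3 => (q.1 i, q.2))

lemma IsOpen.eventually_ball_subset_of_tendsto {T Y : Type*} [TopologicalSpace T]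
    [PseudoMetricSpace Y] {S : Set (T × Y)} (hS : IsOpen S) {ι : Type*} {l : Filter ι}
    {t : ι → T} {t₀ : T} (ht : Tendsto t l (𝓝 t₀)) {r : ι → ℝ} (hr : Tendsto r l (𝓝 0))
    {y : Y} (hy : (t₀, y) ∈ S) : ∀ᶠ i in l, ∀ x ∈ ball y (r i), (t i, x) ∈ S := by
  obtain ⟨u, hu, v, hv, huv⟩ := mem_nhds_prod_iff.mp (hS.mem_nhds hy)
  obtain ⟨δ, hδ, hδv⟩ := Metric.mem_nhds_iff.mp hv
  filter_upwards [ht hu, hr.eventually (gt_mem_nhds hδ)] with i hti hri x hx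
  exact huv ⟨hti, hδv (ball_subset_ball hri.le hx)⟩

lemma eventually_ball_subset_sOctant {ι : Type*} {l : Filter ι} {H : ι → Fin 3 → E4}
    {H₀ : Fin 3 → E4} (hH : Tendsto H l (𝓝 H₀)) {r : ι → ℝ} (hr : Tendsto r l (𝓝 0))
    {α : Fin 3 → Bool} {p : E3} (hp : p ∈ sOctant H₀ α) :
    ∀ᶠ i in l, ball p (r i) ⊆ sOctant (H i) α :=
  (isOpen_setOf_mem_sOctant α).eventually_ball_subset_of_tendsto hH hr hp

def smoothedCount (P : Finset E3) (ε R : ℝ) : Measure E3 :=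
  ∑ p ∈ P, volume[|ball p ε] + (2⁻¹ : ℝ≥0∞) • volume[|ball (0 : E3) R]

section smoothedCount

variable (P : Finset E3) {ε R : ℝ}

lemma smoothedCount_univ (hε : 0 < ε) (hR : 0 < R) :
    smoothedCount P ε R Set.univ = P.card + 2⁻¹ := by
  have hprob : ∀ (c : E3) {r : ℝ}, 0 < r → volume[|ball c r] Set.univ = 1 := fun c r hr =>
    (cond_isProbabilityMeasure_of_finite (measure_ball_pos volume c hr).ne'
      measure_ball_lt_top.ne).measure_univ
  simp [smoothedCount, hprob _ hε, hprob _ hR]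

lemma isMassDistribution_smoothedCount (ε R : ℝ) : IsMassDistribution (smoothedCount P ε R) := by
  have := Measure.smul_finite volume[|ball (0 : E3) R] (inv_ne_top.mpr two_ne_zero)
  have hac : smoothedCount P ε R ≪ volume := by
    refine .add_left (fun s hs => ?_)
      (Measure.smul_absolutelyContinuous.trans cond_absolutelyContinuous)
    simp [Measure.finsetSum_apply,
      fun p => cond_absolutelyContinuous (μ := volume) (s := ball p ε) hs]
  refine ⟨by unfold smoothedCount; infer_instance, fun v hv a => ?_⟩
  exact hac (Measure.addHaar_setOf_inner_eq volume hv a)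

lemma msupport_smoothedCount (hR : 0 < R) (hP : ∀ p ∈ P, closedBall p ε ⊆ closedBall 0 R) :
    msupport (smoothedCount P ε R) = closedBall 0 R := by
  simp only [msupport_eq_support, smoothedCount, Measure.support_add, Measure.support_finset_sum,
    Measure.support_smul (ENNReal.inv_ne_zero.mpr ofNat_ne_top),
    Measure.support_cond_of_isOpen volume isOpen_ball measure_ball_lt_top.ne,
    closure_ball (0 : E3) hR.ne']
  exact Set.union_eq_right.mpr
    (Set.iUnion₂_subset fun p hp => closure_ball_subset_closedBall.trans (hP p hp))

lemma card_le_smoothedCount (hε : 0 < ε) {K : Finset E3} (hK : K ⊆ P) {S : Set E3}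
    (hS : ∀ p ∈ K, ball p ε ⊆ S) : (K.card : ℝ≥0∞) ≤ smoothedCount P ε R S :=
  calc (K.card : ℝ≥0∞) = ∑ p ∈ K, volume[ball p ε | ball p ε] := by
        simp [cond_apply_self (measure_ball_pos volume _ hε).ne' measure_ball_lt_top.ne]
    _ ≤ ∑ p ∈ K, volume[S | ball p ε] := Finset.sum_le_sum fun p hp => measure_mono (hS p hp)
    _ ≤ ∑ p ∈ P, volume[S | ball p ε] := Finset.sum_le_sum_of_subset hK
    _ ≤ smoothedCount P ε R S := by
        simp only [smoothedCount, Measure.add_apply, Measure.finsetSum_apply]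
        exact le_self_add

end smoothedCount

lemma eight_mul_le_of_le_div_eight {k n : ℕ} (h : (k : ℝ≥0∞) ≤ (n + 2⁻¹) / 8) : 8 * k ≤ n := by
  rw [ENNReal.le_div_iff_mul_le (by simp) (by simp)] at h
  have : ((k * 8 : ℕ) : ℝ≥0∞) < (n + 1 : ℕ) := by
    push_cast
    exact h.trans_lt
      (ENNReal.add_lt_add_left (natCast_ne_top n) (ENNReal.inv_lt_one.mpr one_lt_two))
  have := Nat.cast_lt.mp this
  omega

theorem stmt14_general (X : Set (Fin 3 → E4)) (hXc : IsCompact X)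
    (hpart : ∀ μ : Measure E3, IsMassDistribution μ → IsConnected (msupport μ) →
      ∃ H ∈ X, ∀ α : Fin 3 → Bool, μ (sOctant H α) = μ Set.univ / 8)
    (P : Finset E3) :
    ∃ H ∈ X, ∀ α : Fin 3 → Bool,
      (((P : Set E3) ∩ sOctant H α).ncard : ℝ) ≤ (P.card : ℝ) / 8 := by
  classical
  obtain ⟨R, hR, hPR⟩ := P.finite_toSet.isBounded.subset_closedBall_lt 0 (0 : E3)
  set ε : ℕ → ℝ := fun n => 1 / ((n : ℝ) + 1)
  have hε : ∀ n, 0 < ε n := fun n => by positivity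
  have hP : ∀ n, ∀ p ∈ P, closedBall p (ε n) ⊆ closedBall 0 (R + 1) := fun n p hp => by
    refine closedBall_subset_closedBall' ?_
    have : ε n ≤ 1 := by rw [div_le_one (by positivity)]; linarith [n.cast_nonneg (α := ℝ)]
    linarith [mem_closedBall.mp (hPR hp)]
  choose H hHX hH using fun n => hpart (smoothedCount P (ε n) (R + 1))
    (isMassDistribution_smoothedCount P _ _) (by
      rw [msupport_smoothedCount P (by linarith) (hP n)]
      exact (convex_closedBall 0 _).isConnected (nonempty_closedBall.mpr (by linarith)))
  obtain ⟨H₀, hH₀X, φ, hφ, hlim⟩ := hXc.tendsto_subseq hHX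
  refine ⟨H₀, hH₀X, fun α => ?_⟩
  set K := P.filter (· ∈ sOctant H₀ α)
  have hεlim : Tendsto (ε ∘ φ) atTop (𝓝 0) :=
    tendsto_one_div_add_atTop_nhds_zero_nat.comp hφ.tendsto_atTop
  obtain ⟨n, hn⟩ := (K.eventually_all.mpr fun p hp =>
    eventually_ball_subset_sOctant hlim hεlim (Finset.mem_filter.mp hp).2).exists
  have hcount := card_le_smoothedCount P (R := R + 1) (hε (φ n)) (Finset.filter_subset _ P) hn
  rw [Function.comp_apply, hH, smoothedCount_univ P (hε _) (by linarith)] at hcount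
  rw [show (P : Set E3) ∩ sOctant H₀ α = K by ext; simp [K], Set.ncard_coe_finset,
    le_div_iff₀ (by norm_num)]
  exact_mod_cast (mul_comm 8 K.card ▸ eight_mul_le_of_le_div_eight hcount)

/-- Limit argument for finite point sets: if `X ⊆ (S³)³` is a compact set of plane
configurations eight-partitioning every mass distribution with connected support, then every
finite point set `P` admits an eight-partition by some configuration in `X` (each open octant
contains at most `|P|/8` points). -/
theorem stmt14 (X : Set (Fin 3 → E4)) (hXs : ∀ H ∈ X, ∀ i, ‖H i‖ = 1) (hXc : IsCompact X)
    (hpart : ∀ μ : Measure E3, IsMassDistribution μ → IsConnected (msupport μ) →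
      ∃ H ∈ X, ∀ α : Fin 3 → Bool, μ (sOctant H α) = μ Set.univ / 8)
    (P : Finset E3) :
    ∃ H ∈ X, ∀ α : Fin 3 → Bool,
      (((P : Set E3) ∩ sOctant H α).ncard : ℝ) ≤ (P.card : ℝ) / 8 :=
  stmt14_general X hXc hpart P
end
end

section
/- Let X ⊆ (S³)³ be a compact set of configurations eight-partitioning all mass distributions with connected support on ℝ³. If a general (possibly disconnected-support) mass distribution μ on ℝ³ is given, then there is still a configuration in X that eight-partitions μ. (The proof perturbs μ by mixing with a Gaussian and passes to a limit.) -/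
open MeasureTheory
open scoped RealInnerProductSpace

noncomputable section

/-! Mix `μ` with a vanishing multiple `cₙ • 𝒩` of a Gaussian: the mixtures are mass distributions
of full, hence connected, support, so some `Hₙ ∈ X` eight-partitions each of them. By compactness
a subsequence of `Hₙ` converges to some `L ∈ X`, whose planes are nondegenerate since `X ⊆ (S³)³`.
Off these three planes, which are `μ`-null, membership in each octant of `Hₙ` eventually agrees
with membership in the octant of `L`, so the octant masses converge by dominated convergence and
the equipartition passes to the limit. -/

open Filter Set
open scoped ENNReal Topology

section

variable {E : Type*} [NormedAddCommGroup E] [InnerProductSpace ℝ E] [FiniteDimensional ℝ E]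
  [MeasurableSpace E] [BorelSpace E]

lemma addHaar_setOf_inner_eq (μ : Measure E) [μ.IsAddHaarMeasure] {v : E} (hv : v ≠ 0) (a : ℝ) :
    μ {x | ⟪v, x⟫ = a} = 0 := by
  have hplane : {x | ⟪v, x⟫ = a} =
      (AffineSubspace.mk' ((a / ‖v‖ ^ 2) • v) (LinearMap.ker (innerₛₗ ℝ v)) : Set E) := by
    ext x
    have : ‖v‖ ^ 2 ≠ 0 := by positivity
    simp [AffineSubspace.mem_mk', inner_sub_right, real_inner_smul_right, sub_eq_zero, this]
  rw [hplane]
  refine Measure.addHaar_affineSubspace μ _ fun htop => hv ?_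
  have hdir := congrArg AffineSubspace.direction htop
  rw [AffineSubspace.direction_mk', AffineSubspace.direction_top] at hdir
  have hvv : v ∈ LinearMap.ker (innerₛₗ ℝ v) := hdir ▸ Submodule.mem_top
  simpa using hvv

variable (E) in
def gaussianMeasure : Measure E :=
  volume.withDensity fun x => ENNReal.ofReal (Real.exp (-‖x‖ ^ 2))

instance : IsFiniteMeasure (gaussianMeasure E) := by
  have hint : Integrable fun x : E => Real.exp (-‖x‖ ^ 2) := by
    simpa [Complex.norm_exp, ← Complex.ofReal_pow] using
      (GaussianFourier.integrable_cexp_neg_mul_sq_norm_add (V := E) (b := 1) (by simp) 0 0).norm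
  exact isFiniteMeasure_withDensity_ofReal hint.hasFiniteIntegral

instance : (gaussianMeasure E).IsOpenPosMeasure where
  open_pos U hU hne := by
    rw [gaussianMeasure, Ne, withDensity_apply_eq_zero' (by fun_prop)]
    simpa [Real.exp_pos] using hU.measure_ne_zero volume hne

lemma gaussianMeasure_absolutelyContinuous : gaussianMeasure E ≪ volume :=
  withDensity_absolutelyContinuous _ _

end

lemma isMassDistribution_gaussianMeasure : IsMassDistribution (gaussianMeasure E3) :=
  ⟨inferInstance, fun _ hv a =>
    gaussianMeasure_absolutelyContinuous (addHaar_setOf_inner_eq volume hv a)⟩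

def planeForm (w : E4) (x : E3) : ℝ := w 0 * x 0 + w 1 * x 1 + w 2 * x 2 + w 3

lemma planeForm_eq_inner_add (w : E4) (x : E3) :
    planeForm w x = ⟪!₂[w 0, w 1, w 2], x⟫ + w 3 := by
  simp [planeForm, PiLp.inner_apply, Fin.sum_univ_three, mul_comm]

lemma IsMassDistribution.measure_planeForm_eq_zero {μ : Measure E3} (hμ : IsMassDistribution μ)
    {w : E4} (hw : w ≠ 0) : μ {x | planeForm w x = 0} = 0 := by
  simp_rw [planeForm_eq_inner_add, add_eq_zero_iff_eq_neg]
  by_cases hv : (!₂[w 0, w 1, w 2] : E3) = 0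
  · have hw3 : w 3 ≠ 0 := by
      have h0 := congrArg (· 0) hv
      have h1 := congrArg (· 1) hv
      have h2 := congrArg (· 2) hv
      contrapose! hw
      ext i
      fin_cases i <;> simp_all
    simp [hv, hw3, eq_comm (a := (0 : ℝ))]
  · exact hμ.2 _ hv _

lemma mem_sHalf_iff_sign (w : E4) (s : Bool) (x : E3) :
    x ∈ sHalf w s ↔ SignType.sign (planeForm w x) = if s then 1 else -1 := by
  cases s <;> simp [sHalf, planeForm, sign_eq_one_iff, sign_eq_neg_one_iff]

lemma eventually_mem_sHalf_iff {ι : Type*} {l : Filter ι} {H : ι → E4} {w : E4}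
    (hH : Tendsto H l (𝓝 w)) {x : E3} (hx : planeForm w x ≠ 0) (s : Bool) :
    ∀ᶠ n in l, x ∈ sHalf (H n) s ↔ x ∈ sHalf w s := by
  have hform : Tendsto (fun n => planeForm (H n) x) l (𝓝 (planeForm w x)) :=
    ((show Continuous fun w : E4 => planeForm w x by unfold planeForm; fun_prop).tendsto w).comp hH
  have hsign := (continuousAt_sign_of_ne_zero hx).tendsto.comp hform
  rw [nhds_discrete, tendsto_pure] at hsign
  filter_upwards [hsign] with n hn
  simp only [mem_sHalf_iff_sign, Function.comp_apply] at hn ⊢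
  rw [hn]

lemma measurableSet_sOctant (H : Fin 3 → E4) (α : Fin 3 → Bool) :
    MeasurableSet (sOctant H α) := by
  refine MeasurableSet.iInter fun i => ?_
  cases α i <;> simp only [sHalf] <;> exact measurableSet_lt (by fun_prop) (by fun_prop)

lemma tendsto_measure_sOctant {μ : Measure E3} (hμ : IsMassDistribution μ) {ι : Type*}
    {l : Filter ι} [l.IsCountablyGenerated] {H : ι → Fin 3 → E4} {L : Fin 3 → E4}
    (hH : Tendsto H l (𝓝 L)) (hL : ∀ i, L i ≠ 0) (α : Fin 3 → Bool) :
    Tendsto (fun n => μ (sOctant (H n) α)) l (𝓝 (μ (sOctant L α))) := by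
  have := hμ.1
  have hoff : ∀ᵐ x ∂μ, ∀ i, planeForm (L i) x ≠ 0 :=
    ae_all_iff.2 fun i => measure_eq_zero_iff_ae_notMem.1 (hμ.measure_planeForm_eq_zero (hL i))
  refine tendsto_measure_of_ae_tendsto_indicator_of_isFiniteMeasure l
    (measurableSet_sOctant L α) (fun n => measurableSet_sOctant (H n) α) ?_
  filter_upwards [hoff] with x hx
  filter_upwards [eventually_all.2 fun i =>
    eventually_mem_sHalf_iff ((continuous_apply i).tendsto L |>.comp hH) (hx i) (α i)] with n hn
  simp only [sOctant, mem_iInter]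
  exact forall_congr' hn

lemma IsMassDistribution.add_smul {μ ν : Measure E3} (hμ : IsMassDistribution μ)
    (hν : IsMassDistribution ν) {c : ℝ≥0∞} (hc : c ≠ ∞) : IsMassDistribution (μ + c • ν) := by
  have := hμ.1
  have := hν.1
  refine ⟨⟨?_⟩, fun v hv a => by simp [hμ.2 v hv a, hν.2 v hv a]⟩
  simp [ENNReal.mul_lt_top hc.lt_top (measure_lt_top ν univ)]

lemma msupport_add_smul_eq_univ (μ ν : Measure E3) [ν.IsOpenPosMeasure]
    {c : ℝ≥0∞} (hc : c ≠ 0) : msupport (μ + c • ν) = univ := by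
  have := Measure.isOpenPosMeasure_smul ν hc
  have : (μ + c • ν).IsOpenPosMeasure := (Measure.le_add_left le_rfl).isOpenPosMeasure
  exact eq_univ_of_forall fun x _ hr => Metric.measure_ball_pos _ x hr

lemma tendsto_add_smul_apply {α ι : Type*} [MeasurableSpace α] {μ ν : Measure α}
    [IsFiniteMeasure ν] {l : Filter ι} {c : ι → ℝ≥0∞} (hc : Tendsto c l (𝓝 0)) {s : ι → Set α}
    {a : ℝ≥0∞} (hμ : Tendsto (fun n => μ (s n)) l (𝓝 a)) :
    Tendsto (fun n => (μ + c n • ν) (s n)) l (𝓝 a) := by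
  have hν : Tendsto (fun n => c n * ν (s n)) l (𝓝 0) := by
    have hbound := ENNReal.Tendsto.mul_const hc (.inr (measure_ne_top ν univ))
    rw [zero_mul] at hbound
    exact tendsto_of_tendsto_of_tendsto_of_le_of_le tendsto_const_nhds hbound
      (fun _ => zero_le) fun n => by gcongr; exact subset_univ _
  simpa using hμ.add hν

/-- Limit argument for general mass distributions: if `X ⊆ (S³)³` is a compact set of plane
configurations eight-partitioning every mass distribution with connected support, then every
(possibly disconnected-support) mass distribution `μ` is eight-partitioned by some
configuration in `X`. -/
theorem stmt15 (X : Set (Fin 3 → E4)) (hXs : ∀ H ∈ X, ∀ i, ‖H i‖ = 1) (hXc : IsCompact X)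
    (hpart : ∀ μ : Measure E3, IsMassDistribution μ → IsConnected (msupport μ) →
      ∃ H ∈ X, ∀ α : Fin 3 → Bool, μ (sOctant H α) = μ Set.univ / 8)
    (μ : Measure E3) (hμ : IsMassDistribution μ) :
    ∃ H ∈ X, ∀ α : Fin 3 → Bool, μ (sOctant H α) = μ Set.univ / 8 := by
  set c : ℕ → ℝ≥0∞ := fun n => ((n : ℝ≥0∞) + 1)⁻¹
  have hc : Tendsto c atTop (𝓝 0) := by
    refine (ENNReal.tendsto_inv_nat_nhds_zero.comp (tendsto_add_atTop_nat 1)).congr fun n => ?_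
    simp [c]
  have hconn : ∀ n, IsConnected (msupport (μ + c n • gaussianMeasure E3)) := fun n => by
    rw [msupport_add_smul_eq_univ _ _ (by simp [c])]
    exact isConnected_univ
  choose H hHX hHpart using fun n =>
    hpart _ (hμ.add_smul isMassDistribution_gaussianMeasure (by simp [c])) (hconn n)
  obtain ⟨L, hLX, φ, hφ, hHL⟩ := hXc.tendsto_subseq hHX
  have hL : ∀ i, L i ≠ 0 := fun i hi => by simpa [hi] using hXs L hLX i
  have hcφ := hc.comp hφ.tendsto_atTop
  refine ⟨L, hLX, fun α => tendsto_nhds_unique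
    (tendsto_add_smul_apply (ν := gaussianMeasure E3) hcφ (tendsto_measure_sOctant hμ hHL hL α)) ?_⟩
  simp only [Function.comp_apply, hHpart]
  exact ENNReal.Tendsto.div_const (tendsto_add_smul_apply hcφ tendsto_const_nhds) (.inr (by simp))
end
end
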